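/- Let g_ε(θ) = (1 + e^{iθ})/2 + iε(e^{iθ} - 1)². There exist θ₀ > 0 and bounded functions such that for all |θ| ≤ θ₀ and all |ε| < 1, |g_ε(θ)|² ≤ 1 - θ²/8; in particular |g_ε(θ)| ≤ 1 with equality on [-θ₀, θ₀] if and only if θ = 0. -/

import Mathlib

/-!
With `u = 1 - cos θ` one has `|g_ε(θ)|² = 1 - u/2 + 2ε sin θ · u + 4ε²u²`. For `|ε| ≤ 1` the
last two terms are at most `(2|θ| + 4u) u ≤ u/8` when `|θ| ≤ 1/20`, so `|g_ε(θ)|² ≤ 1 - 3u/8`,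
and the Taylor bound `u ≥ θ²/2 - 5θ⁴/96` turns this into `1 - θ²/8`.
-/

noncomputable def gE (ε θ : ℝ) : ℂ :=
  (1 + Complex.exp (θ * Complex.I)) / 2 + Complex.I * ε * (Complex.exp (θ * Complex.I) - 1) ^ 2

open Real

lemma sq_norm_gE (ε θ : ℝ) :
    ‖gE ε θ‖ ^ 2 =
      1 - (1 - cos θ) / 2 + 2 * ε * sin θ * (1 - cos θ) + 4 * ε ^ 2 * (1 - cos θ) ^ 2 := by
  have hexp : Complex.exp (θ * Complex.I) = ⟨cos θ, sin θ⟩ := by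
    apply Complex.ext <;> simp [Complex.exp_ofReal_mul_I_re, Complex.exp_ofReal_mul_I_im]
  rw [Complex.sq_norm, gE, hexp, Complex.normSq_apply]
  simp only [Complex.add_re, Complex.add_im, Complex.mul_re, Complex.mul_im, Complex.sub_re,
    Complex.sub_im, Complex.div_ofNat_re, Complex.div_ofNat_im, pow_two, Complex.one_re,
    Complex.one_im, Complex.I_re, Complex.I_im, Complex.ofReal_re, Complex.ofReal_im]
  linear_combination (sin θ ^ 2 * ε ^ 2 - sin θ * ε + cos θ ^ 2 * ε ^ 2 - 4 * cos θ * ε ^ 2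
    + 3 * ε ^ 2 + 1 / 4) * sin_sq_add_cos_sq θ

lemma one_sub_cos_ge {θ : ℝ} (hθ : |θ| ≤ 1) : θ ^ 2 / 2 - 5 / 96 * θ ^ 4 ≤ 1 - cos θ := by
  have h := (abs_le.mp (cos_bound hθ)).2
  rw [pow_abs, abs_of_nonneg (by positivity : (0 : ℝ) ≤ θ ^ 4)] at h
  linarith

lemma mul_add_sq_mul_le {e s t u : ℝ} (he : |e| ≤ 1) (hs : |s| ≤ t) (hu : 0 ≤ u) :
    2 * e * s * u + 4 * e ^ 2 * u ^ 2 ≤ (2 * t + 4 * u) * u := by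
  have hes : e * s ≤ t := by
    calc e * s ≤ |e| * |s| := by rw [← abs_mul]; exact le_abs_self _
      _ ≤ 1 * t := mul_le_mul he hs (abs_nonneg s) zero_le_one
      _ = t := one_mul t
  have he2 : e ^ 2 ≤ 1 := by rw [← sq_abs]; nlinarith [abs_nonneg e]
  nlinarith [mul_le_mul_of_nonneg_right he2 (sq_nonneg u)]

lemma sq_norm_gE_le {ε θ : ℝ} (hε : |ε| ≤ 1) (hθ : |θ| ≤ 1 / 20) :
    ‖gE ε θ‖ ^ 2 ≤ 1 - θ ^ 2 / 8 := by
  set u := 1 - cos θ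
  have hu_nonneg : 0 ≤ u := sub_nonneg.mpr (cos_le_one θ)
  have hu_le : u ≤ θ ^ 2 / 2 := by linarith [one_sub_sq_div_two_le_cos (x := θ)]
  have hu_ge : θ ^ 2 / 2 - 5 / 96 * θ ^ 4 ≤ u := one_sub_cos_ge (by linarith)
  have hθ2 : θ ^ 2 ≤ 1 / 400 := by rw [← sq_abs]; nlinarith [abs_nonneg θ]
  have hsmall : 2 * |θ| + 4 * u ≤ 1 / 8 := by linarith
  calc ‖gE ε θ‖ ^ 2 = 1 - u / 2 + (2 * ε * sin θ * u + 4 * ε ^ 2 * u ^ 2) := by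
        rw [sq_norm_gE]; ring
    _ ≤ 1 - u / 2 + (2 * |θ| + 4 * u) * u := by
        gcongr; exact mul_add_sq_mul_le hε abs_sin_le_abs hu_nonneg
    _ ≤ 1 - u / 2 + 1 / 8 * u := by gcongr
    _ ≤ 1 - θ ^ 2 / 8 := by nlinarith [mul_le_mul_of_nonneg_left hθ2 (sq_nonneg θ)]

theorem gE_local_estimate :
    ∃ θ₀ > (0:ℝ), ∀ θ : ℝ, |θ| ≤ θ₀ → ∀ ε : ℝ, |ε| < 1 →
      ‖gE ε θ‖ ^ 2 ≤ 1 - θ ^ 2 / 8 ∧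
      ‖gE ε θ‖ ≤ 1 ∧
      (‖gE ε θ‖ = 1 ↔ θ = 0) := by
  refine ⟨1 / 20, by norm_num, fun θ hθ ε hε => ?_⟩
  have hsq := sq_norm_gE_le hε.le hθ
  have hle : ‖gE ε θ‖ ≤ 1 :=
    (sq_le_one_iff₀ (norm_nonneg _)).mp (hsq.trans (by linarith [sq_nonneg θ]))
  refine ⟨hsq, hle, fun heq => ?_, fun hθ0 => ?_⟩
  · rw [heq] at hsq
    exact pow_eq_zero_iff two_ne_zero |>.mp (le_antisymm (by linarith) (sq_nonneg θ))
  · simp [gE, hθ0]
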